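/- The function A₁^{(1)}(κ) = I₁(κ)/I₀(κ) is differentiable on (0, ∞) with strictly positive derivative, satisfies A₁^{(1)}(0) = 0 and lim_{κ→∞} A₁^{(1)}(κ) = 1; hence A₁^{(1)} : [0, ∞) → [0, 1) is a strictly increasing bijection. -/

import Mathlib

open MeasureTheory Real Set

/-- The modified Bessel function of the first kind of integer order `n`. -/
noncomputable def besselI (n : ℕ) (z : ℝ) : ℝ :=
  (2 * π)⁻¹ * ∫ θ in Ioc 0 (2 * π), Real.cos (n * θ) * Real.exp (z * Real.cos θ)

/-!
With `dθ` the Lebesgue measure on one period, `2π I₀(κ)` is the moment generating function of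
`cos`, so `A = I₁/I₀` is the derivative of its cumulant generating function and `A'` is the
variance of `cos θ` under the von Mises law `∝ e^{κ cos θ} dθ`, positive because `cos` is not
constant. Integrating `d/dθ (sin θ e^{κ cos θ})` over a period gives
`κ ∫ cos² θ e^{κ cos θ} = κ ∫ e^{κ cos θ} - ∫ cos θ e^{κ cos θ}`, i.e. the Riccati equation
`A' = 1 - A/κ - A²`. As `A` increases and stays below `1`, it has a limit `L ≤ 1`; if `L < 1`,
the Riccati equation would give `A' ≥ (1 - L²)/2` for large `κ`, and `A` would be unbounded.
-/

open Filter Topology ProbabilityTheory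

lemma setIntegral_Ioc_pos {f : ℝ → ℝ} {a b c : ℝ} (hab : a < b) (hf : Continuous f)
    (hf₀ : ∀ x, 0 ≤ f x) (hc : c ∈ Icc a b) (hfc : 0 < f c) : 0 < ∫ x in Ioc a b, f x := by
  rw [← intervalIntegral.integral_of_le hab.le]
  exact intervalIntegral.integral_pos hab hf.continuousOn (fun x _ => hf₀ x) ⟨c, hc, hfc⟩

lemma setIntegral_Ioc_lt_setIntegral_Ioc {f g : ℝ → ℝ} {a b c : ℝ} (hab : a < b)
    (hf : Continuous f) (hg : Continuous g) (hfg : ∀ x, f x ≤ g x) (hc : c ∈ Icc a b)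
    (hfgc : f c < g c) : ∫ x in Ioc a b, f x < ∫ x in Ioc a b, g x := by
  simp only [← intervalIntegral.integral_of_le hab.le]
  exact intervalIntegral.integral_lt_integral_of_continuousOn_of_le_of_exists_lt hab
    hf.continuousOn hg.continuousOn (fun x _ => hfg x) ⟨c, hc, hfgc⟩

lemma deriv_deriv_eq_iteratedDeriv_two {𝕜 F : Type*} [NontriviallyNormedField 𝕜]
    [NormedAddCommGroup F] [NormedSpace 𝕜 F] (f : 𝕜 → F) :
    deriv (deriv f) = iteratedDeriv 2 f := by
  rw [iteratedDeriv_succ, iteratedDeriv_one]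

lemma tendsto_atTop_of_le_deriv {f : ℝ → ℝ} (hf : Differentiable ℝ f) {c K : ℝ} (hc : 0 < c)
    (hK : ∀ x, K < x → c ≤ deriv f x) : Tendsto f atTop atTop := by
  have hgrowth : ∀ x, K ≤ x → f K - c * K + c * x ≤ f x := fun x hx => by
    have := (convex_Ici K).mul_sub_le_image_sub_of_le_deriv hf.continuous.continuousOn
      hf.differentiableOn (by simpa using hK) K self_mem_Ici x hx hx
    linarith
  exact tendsto_atTop_mono' _ (eventually_ge_atTop K |>.mono hgrowth)
    (tendsto_atTop_add_const_left _ _ (tendsto_id.const_mul_atTop hc))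

theorem StrictMono.bijOn_Ici_Ico {α β : Type*} [ConditionallyCompleteLinearOrder α]
    [TopologicalSpace α] [OrderTopology α] [DenselyOrdered α] [NoMaxOrder α] [LinearOrder β]
    [TopologicalSpace β] [OrderClosedTopology β] {f : α → β} (hf : StrictMono f)
    (hcont : Continuous f) {b : β} (hb : Tendsto f atTop (𝓝 b)) (a : α) :
    BijOn f (Ici a) (Ico (f a) b) := by
  refine ⟨fun x hx => ⟨hf.monotone hx, ?_⟩, hf.injective.injOn, fun y hy => ?_⟩
  · obtain ⟨x', hx'⟩ := exists_gt x
    exact (hf hx').trans_le (hf.monotone.ge_of_tendsto hb x')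
  · obtain ⟨x, hax, hyx⟩ :=
      ((eventually_ge_atTop a).and (hb.eventually (eventually_gt_nhds hy.2))).exists
    obtain ⟨z, hz, rfl⟩ := intermediate_value_Icc hax hcont.continuousOn ⟨hy.1, hyx.le⟩
    exact ⟨z, hz.1, rfl⟩

local notation "dθ" => volume.restrict (Ioc (0 : ℝ) (2 * π))

lemma mem_interior_integrableExpSet_cos (κ : ℝ) :
    κ ∈ interior (integrableExpSet cos dθ) := by
  suffices integrableExpSet cos dθ = univ by simp [this]
  exact eq_univ_of_forall fun t =>
    (by fun_prop : Continuous fun θ => exp (t * cos θ)).integrableOn_Ioc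

lemma mgf_cos_pos (κ : ℝ) : 0 < mgf cos dθ κ :=
  setIntegral_Ioc_pos (c := 0) (by positivity) (by fun_prop) (fun θ => (exp_pos _).le)
    (by simp [pi_pos.le]) (exp_pos _)

lemma besselI_one_div_besselI_zero (κ : ℝ) :
    besselI 1 κ / besselI 0 κ = deriv (cgf cos dθ) κ := by
  rw [deriv_cgf (mem_interior_integrableExpSet_cos κ), besselI, besselI, mgf,
    mul_div_mul_left _ _ (by positivity)]
  simp

lemma differentiable_deriv_cgf_cos : Differentiable ℝ (deriv (cgf cos dθ)) := fun κ =>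
  (analyticAt_cgf (mem_interior_integrableExpSet_cos κ)).deriv.differentiableAt

lemma deriv_cgf_cos_zero : deriv (cgf cos dθ) 0 = 0 := by
  rw [deriv_cgf_zero (mem_interior_integrableExpSet_cos 0),
    ← intervalIntegral.integral_of_le (by positivity)]
  simp

lemma deriv_cgf_cos_lt_one (κ : ℝ) : deriv (cgf cos dθ) κ < 1 := by
  rw [deriv_cgf (mem_interior_integrableExpSet_cos κ), div_lt_one (mgf_cos_pos κ), mgf]
  refine setIntegral_Ioc_lt_setIntegral_Ioc (c := π) (by positivity) (by fun_prop) (by fun_prop)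
    (fun θ => ?_) ⟨pi_pos.le, by linarith [pi_pos]⟩ (by simp [exp_pos])
  simpa using mul_le_mul_of_nonneg_right (cos_le_one θ) (exp_pos (κ * cos θ)).le

lemma deriv_deriv_cgf_cos_pos (κ : ℝ) : 0 < deriv (deriv (cgf cos dθ)) κ := by
  rw [deriv_deriv_eq_iteratedDeriv_two, iteratedDeriv_two_cgf_eq_integral
    (mem_interior_integrableExpSet_cos κ)]
  refine div_pos ?_ (mgf_cos_pos κ)
  set a := deriv (cgf cos dθ) κ
  obtain ⟨c, hc, hca⟩ : ∃ c ∈ Icc 0 (2 * π), cos c ≠ a := by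
    by_cases ha : a = 0
    · exact ⟨π, ⟨pi_pos.le, by linarith [pi_pos]⟩, by simp [ha]⟩
    · exact ⟨π / 2, ⟨by positivity, by linarith [pi_pos]⟩, by simpa [eq_comm] using ha⟩
  exact setIntegral_Ioc_pos (by positivity) (by fun_prop) (fun θ => by positivity) hc
    (mul_pos (sq_pos_of_ne_zero (sub_ne_zero.2 hca)) (exp_pos _))

lemma strictMono_deriv_cgf_cos : StrictMono (deriv (cgf cos dθ)) :=
  strictMono_of_deriv_pos deriv_deriv_cgf_cos_pos

lemma mul_integral_cos_sq_mul_exp_cos (κ : ℝ) :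
    κ * ∫ θ in Ioc 0 (2 * π), cos θ ^ 2 * exp (κ * cos θ) =
      κ * (∫ θ in Ioc 0 (2 * π), exp (κ * cos θ)) -
        ∫ θ in Ioc 0 (2 * π), cos θ * exp (κ * cos θ) := by
  have hderiv : ∀ θ ∈ uIcc 0 (2 * π), HasDerivAt (fun θ => sin θ * exp (κ * cos θ))
      (cos θ * exp (κ * cos θ) + κ * (cos θ ^ 2 * exp (κ * cos θ)) - κ * exp (κ * cos θ)) θ := by
    intro θ _
    refine ((hasDerivAt_sin θ).fun_mul ((hasDerivAt_cos θ).const_mul κ).exp).congr_deriv ?_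
    linear_combination -κ * exp (κ * cos θ) * sin_sq_add_cos_sq θ
  have hint : ∀ f : ℝ → ℝ, Continuous f → IntervalIntegrable f volume 0 (2 * π) :=
    fun f hf => hf.intervalIntegrable _ _
  have hFTC := intervalIntegral.integral_eq_sub_of_hasDerivAt hderiv (hint _ (by fun_prop))
  simp only [sin_two_pi, sin_zero, zero_mul, sub_zero] at hFTC
  rw [intervalIntegral.integral_sub (hint _ (by fun_prop)) (hint _ (by fun_prop)),
    intervalIntegral.integral_add (hint _ (by fun_prop)) (hint _ (by fun_prop)),
    intervalIntegral.integral_const_mul, intervalIntegral.integral_const_mul] at hFTC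
  simp only [intervalIntegral.integral_of_le (by positivity : (0 : ℝ) ≤ 2 * π)] at hFTC
  linear_combination hFTC

lemma deriv_deriv_cgf_cos {κ : ℝ} (hκ : κ ≠ 0) :
    deriv (deriv (cgf cos dθ)) κ =
      1 - deriv (cgf cos dθ) κ / κ - deriv (cgf cos dθ) κ ^ 2 := by
  rw [deriv_deriv_eq_iteratedDeriv_two, iteratedDeriv_two_cgf
    (mem_interior_integrableExpSet_cos κ), deriv_cgf (mem_interior_integrableExpSet_cos κ)]
  have h := mul_integral_cos_sq_mul_exp_cos κ
  have h₀ := (mgf_cos_pos κ).ne'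
  rw [mgf] at h₀ ⊢
  generalize ∫ θ in Ioc 0 (2 * π), exp (κ * cos θ) = M₀ at h h₀ ⊢
  generalize ∫ θ in Ioc 0 (2 * π), cos θ * exp (κ * cos θ) = M₁ at h ⊢
  generalize ∫ θ in Ioc 0 (2 * π), cos θ ^ 2 * exp (κ * cos θ) = M₂ at h ⊢
  field_simp
  linear_combination M₀ * h

lemma tendsto_deriv_cgf_cos_atTop : Tendsto (deriv (cgf cos dθ)) atTop (𝓝 1) := by
  set A := deriv (cgf cos dθ) with hA
  have hbdd : BddAbove (range A) := ⟨1, forall_mem_range.2 fun κ => (deriv_cgf_cos_lt_one κ).le⟩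
  have hlim := tendsto_atTop_ciSup strictMono_deriv_cgf_cos.monotone hbdd
  set L := ⨆ κ, A κ
  have hL₁ : L ≤ 1 := ciSup_le fun κ => (deriv_cgf_cos_lt_one κ).le
  have hL₀ : 0 ≤ L := deriv_cgf_cos_zero ▸ le_ciSup hbdd 0
  suffices ¬ L < 1 by rwa [show L = 1 by linarith [not_lt.1 this]] at hlim
  intro hL
  have hc : 0 < (1 - L ^ 2) / 2 := by nlinarith
  refine not_tendsto_nhds_of_tendsto_atTop (tendsto_atTop_of_le_deriv
    differentiable_deriv_cgf_cos hc (K := 2 / (1 - L ^ 2)) fun κ hκ => ?_) L hlim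
  have hκ₀ : 0 < κ := lt_trans (div_pos two_pos (by linarith)) hκ
  have hAκ₀ : 0 ≤ A κ := deriv_cgf_cos_zero ▸ strictMono_deriv_cgf_cos.monotone hκ₀.le
  have hAκL : A κ ≤ L := le_ciSup hbdd κ
  have hAκ_div : A κ / κ ≤ (1 - L ^ 2) / 2 := by
    rw [div_le_iff₀ hκ₀]
    rw [div_lt_iff₀ (by linarith)] at hκ
    nlinarith [deriv_cgf_cos_lt_one κ]
  rw [deriv_deriv_cgf_cos hκ₀.ne', ← hA]
  nlinarith

/-- The Bessel function ratio `A₁ = I₁/I₀` is differentiable on `(0,∞)` with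
strictly positive derivative, vanishes at `0`, tends to `1` at infinity, and is a
strictly increasing bijection from `[0,∞)` onto `[0,1)`. -/
theorem besselRatio_strictMono_bijection :
    DifferentiableOn ℝ (fun κ => besselI 1 κ / besselI 0 κ) (Ioi 0) ∧
    (∀ κ ∈ Ioi (0 : ℝ), 0 < deriv (fun κ => besselI 1 κ / besselI 0 κ) κ) ∧
    besselI 1 0 / besselI 0 0 = 0 ∧
    Filter.Tendsto (fun κ => besselI 1 κ / besselI 0 κ) Filter.atTop (nhds 1) ∧
    StrictMonoOn (fun κ => besselI 1 κ / besselI 0 κ) (Ici 0) ∧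
    Set.BijOn (fun κ => besselI 1 κ / besselI 0 κ) (Ici 0) (Ico 0 1) := by
  have hA : (fun κ => besselI 1 κ / besselI 0 κ) = deriv (cgf cos dθ) :=
    funext besselI_one_div_besselI_zero
  have hbij := strictMono_deriv_cgf_cos.bijOn_Ici_Ico differentiable_deriv_cgf_cos.continuous
    tendsto_deriv_cgf_cos_atTop 0
  rw [deriv_cgf_cos_zero] at hbij
  rw [hA]
  exact ⟨differentiable_deriv_cgf_cos.differentiableOn, fun κ _ => deriv_deriv_cgf_cos_pos κ,
    (besselI_one_div_besselI_zero 0).trans deriv_cgf_cos_zero, tendsto_deriv_cgf_cos_atTop,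
    strictMono_deriv_cgf_cos.strictMonoOn _, hbij⟩
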